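/- arXiv:1906.04331 — 3 statements merged into one kernel-verified Lean document; each statement's English description precedes it below -/
import Mathlib

section
/- Prefix preservation across passes: let 1 ≤ t ≤ K. For every initial (gold) sequence y : Fin T → α and every prefix (z_1,…,z_t) ∈ α^t, the marginal probability of the event {the first t output tokens equal (z_1,…,z_t)} is the same under q^{K+1}_y as under q^K_y; consequently it is the same under q^{K'}_y for every K' ≥ K. -/
open scoped ENNReal BigOperators

noncomputable section

variable {α : Type*}

/-- The list of tokens of `w` strictly before position `t` (0-indexed),
i.e. the prefix `(w_1, …, w_{t-1})` in 1-indexed notation. -/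
def prefList {n : ℕ} (w : Fin n → α) (t : Fin n) : List α :=
  List.ofFn (fun s : Fin (t : ℕ) => w ⟨(s : ℕ), s.2.trans t.2⟩)

/-- The sample-decoding probability of the sequence `z`:
`P_T(z) = ∏_{t=1}^T μ(z_1,…,z_{t-1})(z_t)`. -/
def sampleDecodeProb {T : ℕ} (μ : List α → PMF α) (z : Fin T → α) : ℝ≥0∞ :=
  ∏ t : Fin T, μ (prefList z t) (z t)

/-- The pass kernel `Q_k` (mixing probability `p = 1`): given input sequence `w`,
positions `t < k` (1-indexed) are copied from `w` deterministically, and each position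
`t ≥ k` is drawn independently from `μ(w_1,…,w_{t-1})`. -/
def passKernel [Fintype α] [DecidableEq α] {T : ℕ}
    (μ : List α → PMF α) (k : ℕ) (w : Fin T → α) : PMF (Fin T → α) :=
  PMF.ofFintype
    (fun z => ∏ t : Fin T,
      if (t : ℕ) + 1 < k then (if z t = w t then 1 else 0)
      else μ (prefList w t) (z t))
    (by
      classical
      have h : ∀ t : Fin T,
          (∑ a : α, if (t : ℕ) + 1 < k then (if a = w t then (1 : ℝ≥0∞) else 0)
            else μ (prefList w t) a) = 1 := by
        intro t
        split
        · simp
        · rw [← tsum_fintype (L := SummationFilter.unconditional α)]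
          exact (μ (prefList w t)).tsum_coe
      calc
        (∑ z : Fin T → α, ∏ t : Fin T,
            if (t : ℕ) + 1 < k then (if z t = w t then (1 : ℝ≥0∞) else 0)
            else μ (prefList w t) (z t))
            = ∏ t : Fin T, ∑ a : α,
                (if (t : ℕ) + 1 < k then (if a = w t then (1 : ℝ≥0∞) else 0)
                  else μ (prefList w t) a) := by
              rw [Finset.prod_univ_sum]
              rw [Fintype.piFinset_univ]
        _ = 1 := by
              rw [Finset.prod_congr rfl (fun t _ => h t)]
              simp)

/-- The Parallel Scheduled Sampling proposal distribution with mixing probability `p = 1`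
after `K` passes, starting from the gold sequence `y`: the kernels `Q_1, …, Q_K` applied
in succession to the point mass at `y`. -/
def pssProposal [Fintype α] [DecidableEq α] {T : ℕ}
    (μ : List α → PMF α) (y : Fin T → α) : ℕ → PMF (Fin T → α)
  | 0 => PMF.pure y
  | k + 1 => (pssProposal μ y k).bind (passKernel μ (k + 1))

/-- The probability, under the distribution `q` on sequences, of the event that the
first `t` output tokens equal the prefix `z : Fin t → α`. -/
def prefixProb {T t : ℕ} (q : PMF (Fin T → α)) (z : Fin t → α) : ℝ≥0∞ :=
  q.toOuterMeasure {w | ∀ s : Fin T, (h : (s : ℕ) < t) → w s = z ⟨(s : ℕ), h⟩}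

/-! Pass `k + 1` copies the first `k` tokens of its input, so once `t ≤ k` the prefix event holds
after the pass exactly when it held before, and its probability is unchanged. -/

theorem PMF.toOuterMeasure_bind_apply_eq_of_mem_support_iff {β γ : Type*} (q : PMF β)
    (κ : β → PMF γ) {S : Set β} {S' : Set γ}
    (hS : ∀ a, ∀ b ∈ (κ a).support, b ∈ S' ↔ a ∈ S) :
    (q.bind κ).toOuterMeasure S' = q.toOuterMeasure S := by
  classical
  rw [PMF.toOuterMeasure_bind_apply, PMF.toOuterMeasure_apply]
  refine tsum_congr fun a => ?_
  by_cases ha : a ∈ S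
  · have : (κ a).toOuterMeasure S' = 1 :=
      (PMF.toOuterMeasure_apply_eq_one_iff _ _).2 fun b hb => (hS a b hb).2 ha
    simp [this, ha]
  · have : (κ a).toOuterMeasure S' = 0 :=
      (PMF.toOuterMeasure_apply_eq_zero_iff _ _).2 <|
        Set.disjoint_left.2 fun b hb hbS => ha ((hS a b hb).1 hbS)
    simp [this, ha]

theorem apply_eq_of_mem_support_passKernel [Fintype α] [DecidableEq α] {T : ℕ}
    {μ : List α → PMF α} {k : ℕ} {w x : Fin T → α} (hx : x ∈ (passKernel μ k w).support)
    (s : Fin T) (hs : (s : ℕ) + 1 < k) : x s = w s := by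
  rw [PMF.mem_support_iff, passKernel, PMF.ofFintype_apply, Finset.prod_ne_zero_iff] at hx
  simpa [hs] using hx s (Finset.mem_univ s)

theorem prefixProb_bind_passKernel [Fintype α] [DecidableEq α] {T t k : ℕ} (hk : t ≤ k)
    (μ : List α → PMF α) (q : PMF (Fin T → α)) (z : Fin t → α) :
    prefixProb (q.bind (passKernel μ (k + 1))) z = prefixProb q z := by
  refine PMF.toOuterMeasure_bind_apply_eq_of_mem_support_iff q _ fun w x hx => ?_
  have hxw : ∀ s : Fin T, (s : ℕ) < t → x s = w s := fun s hs =>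
    apply_eq_of_mem_support_passKernel hx s (by omega)
  exact forall₂_congr fun s hs => by rw [hxw s hs]

theorem pss_prefix_preserved_general [Fintype α] [DecidableEq α]
    {T t K : ℕ} (htK : t ≤ K)
    (μ : List α → PMF α) (y : Fin T → α) (z : Fin t → α) :
    prefixProb (pssProposal μ y (K + 1)) z = prefixProb (pssProposal μ y K) z ∧
    ∀ K', K ≤ K' → prefixProb (pssProposal μ y K') z = prefixProb (pssProposal μ y K) z := by
  have step : ∀ k, t ≤ k →
      prefixProb (pssProposal μ y (k + 1)) z = prefixProb (pssProposal μ y k) z :=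
    fun k hk => prefixProb_bind_passKernel hk μ _ z
  refine ⟨step K htK, fun K' hK' => ?_⟩
  induction K', hK' using Nat.le_induction with
  | base => rfl
  | succ k hKk ih => rw [step k (htK.trans hKk), ih]

/-- Prefix preservation across passes: for `1 ≤ t ≤ K`, the marginal
probability that the first `t` output tokens equal a given prefix `z` is the same under
`q^{K+1}_y` as under `q^K_y`, and consequently the same under `q^{K'}_y` for all `K' ≥ K`. -/
theorem pss_prefix_preserved [Fintype α] [DecidableEq α] [Nonempty α]
    {T t K : ℕ} (hT : 0 < T) (ht : 1 ≤ t) (htK : t ≤ K)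
    (μ : List α → PMF α) (y : Fin T → α) (z : Fin t → α) :
    prefixProb (pssProposal μ y (K + 1)) z = prefixProb (pssProposal μ y K) z ∧
    ∀ K', K ≤ K' → prefixProb (pssProposal μ y K') z = prefixProb (pssProposal μ y K) z :=
  pss_prefix_preserved_general htK μ y z

end
end

section
/- Factorization of the next-token marginal: let 1 ≤ t ≤ K and t + 1 ≤ T. For every initial (gold) sequence y : Fin T → α and every prefix (z_1,…,z_{t+1}) ∈ α^{t+1}, the q^{K+1}_y-marginal probability that the first t+1 output tokens equal (z_1,…,z_{t+1}) equals the q^K_y-marginal probability that the first t output tokens equal (z_1,…,z_t), multiplied by μ(z_1,…,z_t)(z_{t+1}). -/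
open scoped ENNReal BigOperators

noncomputable section

variable {α : Type*}

/-! Each pass kernel `Q_k` is a product over positions, so the probability of a prefix event is
a product of one-position probabilities. A pass `Q_k` with `u < k` copies the first `u` tokens,
so the `u`-token prefix marginal is frozen from `q^u` on; the pass `Q_{t+1}` copies `t` tokens
and samples token `t + 1` from `μ` of that prefix. Hence
`q^{K+1}(z_{≤t+1}) = q^{t+1}(z_{≤t+1}) = q^t(z_{≤t}) μ(z_{≤t})(z_{t+1})`
`= q^K(z_{≤t}) μ(z_{≤t})(z_{t+1})`. -/

open Set

theorem Set.indicator_univ_pi_prod {ι M : Type*} [Fintype ι] [CommMonoidWithZero M]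
    {β : ι → Type*} (A : ∀ i, Set (β i)) (f : ∀ i, β i → M) (v : ∀ i, β i) :
    (univ.pi A).indicator (fun v => ∏ i, f i (v i)) v = ∏ i, (A i).indicator (f i) (v i) := by
  by_cases hv : v ∈ univ.pi A
  · rw [indicator_of_mem hv]
    exact Finset.prod_congr rfl fun i _ => (indicator_of_mem (hv i (mem_univ i)) _).symm
  · obtain ⟨i, -, hi⟩ := not_forall₂.mp hv
    rw [indicator_of_notMem hv]
    exact (Finset.prod_eq_zero (Finset.mem_univ i) (indicator_of_notMem hi _)).symm

namespace PMF

theorem toOuterMeasure_univ_pi_of_apply_eq_prod {ι β : Type*} [Fintype ι] [DecidableEq ι]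
    [Fintype β] (q : PMF (ι → β)) (p : ι → PMF β) (hq : ∀ v, q v = ∏ i, p i (v i))
    (A : ι → Set β) :
    q.toOuterMeasure (univ.pi A) = ∏ i, (p i).toOuterMeasure (A i) := by
  simp only [toOuterMeasure_apply_fintype]
  rw [Finset.prod_univ_sum, Fintype.piFinset_univ]
  refine Finset.sum_congr rfl fun v _ => ?_
  rw [← Set.indicator_univ_pi_prod, funext hq]

theorem toOuterMeasure_bind_of_eq_indicator {β γ : Type*} (q : PMF β) (κ : β → PMF γ)
    {S : Set γ} {E : Set β} {c : ℝ≥0∞}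
    (hκ : ∀ w, (κ w).toOuterMeasure S = E.indicator (fun _ => c) w) :
    (q.bind κ).toOuterMeasure S = q.toOuterMeasure E * c := by
  rw [toOuterMeasure_bind_apply, toOuterMeasure_apply, ← ENNReal.tsum_mul_right]
  refine tsum_congr fun w => ?_
  rw [hκ]
  by_cases hw : w ∈ E <;> simp [hw]

theorem toOuterMeasure_univ {β : Type*} (p : PMF β) : p.toOuterMeasure univ = 1 :=
  (toOuterMeasure_apply_eq_one_iff p univ).2 (subset_univ _)

end PMF

def prefixCoordSet {T u : ℕ} (z : Fin u → α) (s : Fin T) : Set α :=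
  if h : (s : ℕ) < u then {z ⟨s, h⟩} else univ

theorem prefixProb_eq_univ_pi {T u : ℕ} (q : PMF (Fin T → α)) (z : Fin u → α) :
    prefixProb q z = q.toOuterMeasure (univ.pi (prefixCoordSet z)) := by
  unfold prefixProb
  congr 1
  ext w
  simp only [mem_ofPred_eq, mem_pi, mem_univ, forall_const, prefixCoordSet]
  refine forall_congr' fun s => ?_
  split_ifs with h <;> simp [h]

theorem prefList_of_mem_univ_pi {T t : ℕ} (ht : t < T) {z : Fin t → α} {w : Fin T → α}
    (hw : w ∈ univ.pi (prefixCoordSet z)) : prefList w ⟨t, ht⟩ = List.ofFn z := by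
  refine congrArg List.ofFn (funext fun s => ?_)
  have := hw ⟨s, s.2.trans ht⟩ (mem_univ _)
  simpa [prefixCoordSet, s.2] using this

section Prefix

variable [Fintype α] [DecidableEq α]

def passKernelCoord {T : ℕ} (μ : List α → PMF α) (k : ℕ) (w : Fin T → α) (s : Fin T) : PMF α :=
  if (s : ℕ) + 1 < k then PMF.pure (w s) else μ (prefList w s)

theorem passKernel_apply {T : ℕ} (μ : List α → PMF α) (k : ℕ) (w v : Fin T → α) :
    passKernel μ k w v = ∏ s, passKernelCoord μ k w s (v s) := by
  simp only [passKernel, PMF.ofFintype_apply, passKernelCoord]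
  refine Finset.prod_congr rfl fun s _ => ?_
  by_cases hk : (s : ℕ) + 1 < k <;> simp [hk, PMF.pure_apply]

theorem prefixProb_passKernel {T u : ℕ} (μ : List α → PMF α) (k : ℕ) (w : Fin T → α)
    (z : Fin u → α) :
    prefixProb (passKernel μ k w) z
      = ∏ s, (passKernelCoord μ k w s).toOuterMeasure (prefixCoordSet z s) := by
  rw [prefixProb_eq_univ_pi]
  exact PMF.toOuterMeasure_univ_pi_of_apply_eq_prod _ _ (passKernel_apply μ k w) _

theorem prefixProb_passKernel_of_lt {T u k : ℕ} (μ : List α → PMF α) (hu : u < k)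
    (w : Fin T → α) (z : Fin u → α) :
    prefixProb (passKernel μ k w) z = (univ.pi (prefixCoordSet z)).indicator (fun _ => 1) w := by
  classical
  have hcoord : ∀ s, (passKernelCoord μ k w s).toOuterMeasure (prefixCoordSet z s)
      = (prefixCoordSet z s).indicator (fun _ => 1) (w s) := by
    intro s
    by_cases hs : (s : ℕ) < u
    · rw [passKernelCoord, if_pos (by omega), PMF.toOuterMeasure_pure_apply, indicator_apply]
    · rw [prefixCoordSet, dif_neg hs, PMF.toOuterMeasure_univ, indicator_univ]
  rw [prefixProb_passKernel, Finset.prod_congr rfl fun s _ => hcoord s,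
    ← Set.indicator_univ_pi_prod, Finset.prod_const_one]

theorem prefixProb_passKernel_succ {T t : ℕ} (μ : List α → PMF α) (ht : t < T)
    (w : Fin T → α) (z : Fin (t + 1) → α) :
    prefixProb (passKernel μ (t + 1) w) z
      = (univ.pi (prefixCoordSet (fun s : Fin t => z s.castSucc))).indicator
          (fun _ => μ (List.ofFn (fun s : Fin t => z s.castSucc)) (z (Fin.last t))) w := by
  classical
  set z' : Fin t → α := fun s => z s.castSucc
  have hcoord : ∀ s, (passKernelCoord μ (t + 1) w s).toOuterMeasure (prefixCoordSet z s)
      = (prefixCoordSet z' s).indicator (fun _ => 1) (w s)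
        * if s = ⟨t, ht⟩ then μ (prefList w s) (z (Fin.last t)) else 1 := by
    intro s
    rcases lt_trichotomy (s : ℕ) t with hs | hs | hs
    · have hne : s ≠ ⟨t, ht⟩ := fun h => hs.ne (congrArg Fin.val h)
      rw [passKernelCoord, if_pos (by omega), PMF.toOuterMeasure_pure_apply, if_neg hne,
        mul_one, indicator_apply]
      simp [prefixCoordSet, hs, show (s : ℕ) < t + 1 by omega, z']
    · obtain rfl : s = ⟨t, ht⟩ := Fin.ext hs
      rw [passKernelCoord, if_neg (lt_irrefl _), if_pos rfl, prefixCoordSet,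
        dif_pos (Nat.lt_succ_self t), PMF.toOuterMeasure_apply_singleton, prefixCoordSet,
        dif_neg (lt_irrefl t), indicator_univ, one_mul]
      rfl
    · have hne : s ≠ ⟨t, ht⟩ := fun h => hs.ne' (congrArg Fin.val h)
      rw [passKernelCoord, if_neg (by omega), prefixCoordSet, dif_neg (by omega),
        PMF.toOuterMeasure_univ, prefixCoordSet, dif_neg (by omega), indicator_univ, if_neg hne,
        mul_one]
  rw [prefixProb_passKernel, Finset.prod_congr rfl fun s _ => hcoord s, Finset.prod_mul_distrib,
    ← Set.indicator_univ_pi_prod, Finset.prod_const_one, Finset.prod_ite_eq',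
    if_pos (Finset.mem_univ _)]
  by_cases hw : w ∈ univ.pi (prefixCoordSet z')
  · rw [indicator_of_mem hw, indicator_of_mem hw, one_mul, prefList_of_mem_univ_pi ht hw]
  · rw [indicator_of_notMem hw, indicator_of_notMem hw, zero_mul]

theorem prefixProb_bind_passKernel_of_lt {T u k : ℕ} (μ : List α → PMF α) (hu : u < k)
    (q : PMF (Fin T → α)) (z : Fin u → α) :
    prefixProb (q.bind (passKernel μ k)) z = prefixProb q z := by
  rw [prefixProb_eq_univ_pi, prefixProb_eq_univ_pi,
    PMF.toOuterMeasure_bind_of_eq_indicator q _ fun w => ?_, mul_one]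
  rw [← prefixProb_eq_univ_pi, prefixProb_passKernel_of_lt μ hu]

theorem prefixProb_bind_passKernel_succ {T t : ℕ} (μ : List α → PMF α) (ht : t < T)
    (q : PMF (Fin T → α)) (z : Fin (t + 1) → α) :
    prefixProb (q.bind (passKernel μ (t + 1))) z
      = prefixProb q (fun s : Fin t => z s.castSucc)
        * μ (List.ofFn (fun s : Fin t => z s.castSucc)) (z (Fin.last t)) := by
  rw [prefixProb_eq_univ_pi, prefixProb_eq_univ_pi,
    PMF.toOuterMeasure_bind_of_eq_indicator q _ fun w => ?_]
  rw [← prefixProb_eq_univ_pi, prefixProb_passKernel_succ μ ht]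

theorem prefixProb_pssProposal_of_le {T u m : ℕ} (μ : List α → PMF α) (y : Fin T → α)
    (z : Fin u → α) (hum : u ≤ m) :
    prefixProb (pssProposal μ y m) z = prefixProb (pssProposal μ y u) z := by
  induction m, hum using Nat.le_induction with
  | base => rfl
  | succ m hum ih => rw [pssProposal, prefixProb_bind_passKernel_of_lt μ (by omega), ih]

end Prefix

theorem pss_next_token_factorization_general [Fintype α] [DecidableEq α]
    {T t K : ℕ} (htK : t ≤ K) (htT : t + 1 ≤ T)
    (μ : List α → PMF α) (y : Fin T → α) (z : Fin (t + 1) → α) :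
    prefixProb (pssProposal μ y (K + 1)) z
      = prefixProb (pssProposal μ y K) (fun s : Fin t => z s.castSucc)
        * μ (List.ofFn (fun s : Fin t => z s.castSucc)) (z (Fin.last t)) := by
  rw [prefixProb_pssProposal_of_le μ y z (by omega : t + 1 ≤ K + 1), pssProposal,
    prefixProb_bind_passKernel_succ μ htT, prefixProb_pssProposal_of_le μ y _ htK]

/-- Factorization of the next-token marginal: for `1 ≤ t ≤ K` and
`t + 1 ≤ T`, the `q^{K+1}_y`-marginal probability of the prefix `(z_1,…,z_{t+1})` equals
the `q^K_y`-marginal probability of `(z_1,…,z_t)` times `μ(z_1,…,z_t)(z_{t+1})`. -/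
theorem pss_next_token_factorization [Fintype α] [DecidableEq α] [Nonempty α]
    {T t K : ℕ} (hT : 0 < T) (ht : 1 ≤ t) (htK : t ≤ K) (htT : t + 1 ≤ T)
    (μ : List α → PMF α) (y : Fin T → α) (z : Fin (t + 1) → α) :
    prefixProb (pssProposal μ y (K + 1)) z
      = prefixProb (pssProposal μ y K) (fun s : Fin t => z s.castSucc)
        * μ (List.ofFn (fun s : Fin t => z s.castSucc)) (z (Fin.last t)) :=
  pss_next_token_factorization_general htK htT μ y z

end
end

section
/- Independence from the gold sequence: let K ≥ T ≥ 1. For any two initial (gold) sequences y, y' : Fin T → α, the Parallel Scheduled Sampling proposal distributions with mixing probability p = 1 after K passes coincide: q^K_y = q^K_{y'} as distributions on sequences z : Fin T → α. -/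
open scoped ENNReal BigOperators

noncomputable section

variable {α : Type*}

/-! After `k` passes the first `k` tokens already follow the sample-decoding law: pass `k + 1`
copies them, and draws token `k + 1` from `μ` conditioned on a prefix that agrees with them,
while the later tokens are freshly resampled. Once `k ≥ T` this describes the whole
sequence, whose law `sampleDecodeProb μ` no longer involves the gold sequence. -/

theorem Fintype.sum_indicator_prod_eq_prod {ι β R : Type*} [Fintype ι] [DecidableEq ι]
    [Fintype β] [CommSemiring R] (p : ι → Prop) [DecidablePred p] (z : ι → β)
    (f : ι → β → R) :
    ∑ w : ι → β, {w | ∀ i, p i → w i = z i}.indicator (fun w => ∏ i, f i (w i)) w =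
      ∏ i, if p i then f i (z i) else ∑ b, f i b := by
  classical
  set s : ι → Finset β := fun i => if p i then {z i} else Finset.univ
  have hmem (w : ι → β) : w ∈ Fintype.piFinset s ↔ ∀ i, p i → w i = z i := by
    simp only [Fintype.mem_piFinset, s]
    refine forall_congr' fun i => ?_
    split_ifs <;> simp [*]
  calc ∑ w : ι → β, {w | ∀ i, p i → w i = z i}.indicator (fun w => ∏ i, f i (w i)) w
      = ∑ w ∈ Fintype.piFinset s, ∏ i, f i (w i) := by
        simp only [Set.indicator_apply, Set.mem_ofPred_eq, ← Finset.sum_filter]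
        exact Finset.sum_congr (by ext w; simp [hmem]) fun _ _ => rfl
    _ = ∏ i, ∑ b ∈ s i, f i b := (Finset.prod_univ_sum s f).symm
    _ = ∏ i, if p i then f i (z i) else ∑ b, f i b := by
        refine Finset.prod_congr rfl fun i _ => ?_
        split_ifs <;> simp [s, *]

theorem PMF.sum_coe_fintype {β : Type*} [Fintype β] (p : PMF β) : ∑ b, p b = 1 := by
  rw [← tsum_fintype (L := SummationFilter.unconditional β)]
  exact p.tsum_coe

theorem prefList_congr {n : ℕ} {w v : Fin n → α} {t : Fin n}
    (h : ∀ s : Fin n, (s : ℕ) < t → w s = v s) : prefList w t = prefList v t :=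
  congrArg List.ofFn (funext fun s => h ⟨s, s.2.trans t.2⟩ s.2)

def prefixCylinder {T : ℕ} (k : ℕ) (z : Fin T → α) : Set (Fin T → α) :=
  {w | ∀ t : Fin T, (t : ℕ) < k → w t = z t}

theorem prefixCylinder_of_le {T k : ℕ} (hk : T ≤ k) (z : Fin T → α) :
    prefixCylinder k z = {z} := by
  ext w
  simp only [prefixCylinder, Set.mem_ofPred_eq, Set.mem_singleton_iff, funext_iff]
  exact ⟨fun h t => h t (t.2.trans_le hk), fun h t _ => h t⟩

section ParallelScheduledSampling

variable [Fintype α] [DecidableEq α] {T : ℕ} (μ : List α → PMF α)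

theorem coe_passKernel (k : ℕ) (v : Fin T → α) :
    ⇑(passKernel μ k v) = fun w => ∏ t : Fin T,
      if (t : ℕ) + 1 < k then (if w t = v t then 1 else 0) else μ (prefList v t) (w t) :=
  rfl

theorem passKernel_toOuterMeasure_prefixCylinder (k : ℕ) (v z : Fin T → α) :
    (passKernel μ (k + 1) v).toOuterMeasure (prefixCylinder (k + 1) z) =
      (prefixCylinder k z).indicator
        (fun _ => ∏ t : Fin T, if (t : ℕ) = k then μ (prefList z t) (z t) else 1) v := by
  rw [PMF.toOuterMeasure_apply_fintype, coe_passKernel, prefixCylinder,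
    Fintype.sum_indicator_prod_eq_prod (fun t : Fin T => (t : ℕ) < k + 1) z
      fun t a => if (t : ℕ) + 1 < k + 1 then (if a = v t then 1 else 0) else μ (prefList v t) a]
  by_cases hv : v ∈ prefixCylinder k z
  · rw [Set.indicator_of_mem hv]
    refine Finset.prod_congr rfl fun t _ => ?_
    rcases lt_trichotomy (t : ℕ) k with h | h | h
    · simp [h, hv t h, h.ne]
    · have : prefList v t = prefList z t := prefList_congr fun s hs => hv s (h ▸ hs)
      simp [h, this]
    · simp [h.ne', PMF.sum_coe_fintype, (show ¬ (t : ℕ) + 1 < k + 1 by omega),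
        (show ¬ (t : ℕ) < k + 1 by omega)]
  · rw [Set.indicator_of_notMem hv]
    obtain ⟨t, ht, hne⟩ : ∃ t : Fin T, (t : ℕ) < k ∧ v t ≠ z t := by
      simpa [prefixCylinder] using hv
    exact Finset.prod_eq_zero (Finset.mem_univ t) (by simp [ht, Ne.symm hne, Nat.lt_succ_of_lt ht])

theorem pssProposal_toOuterMeasure_prefixCylinder (y : Fin T → α) (k : ℕ) (z : Fin T → α) :
    (pssProposal μ y k).toOuterMeasure (prefixCylinder k z) =
      ∏ t : Fin T, if (t : ℕ) < k then μ (prefList z t) (z t) else 1 := by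
  induction k with
  | zero => simp [prefixCylinder, PMF.sum_coe_fintype]
  | succ k ih =>
    set c := ∏ t : Fin T, if (t : ℕ) = k then μ (prefList z t) (z t) else 1
    calc (pssProposal μ y (k + 1)).toOuterMeasure (prefixCylinder (k + 1) z)
        = ∑' v, (prefixCylinder k z).indicator (pssProposal μ y k) v * c := by
          simp only [pssProposal, PMF.toOuterMeasure_bind_apply,
            passKernel_toOuterMeasure_prefixCylinder]
          congr 1 with v
          by_cases hv : v ∈ prefixCylinder k z <;> simp [hv, c]
      _ = (∏ t : Fin T, if (t : ℕ) < k then μ (prefList z t) (z t) else 1) * c := by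
          rw [ENNReal.tsum_mul_right, ← PMF.toOuterMeasure_apply, ih]
      _ = ∏ t : Fin T, if (t : ℕ) < k + 1 then μ (prefList z t) (z t) else 1 := by
          rw [← Finset.prod_mul_distrib]
          refine Finset.prod_congr rfl fun t _ => ?_
          rcases lt_trichotomy (t : ℕ) k with h | h | h
          · simp [h, h.ne, Nat.lt_succ_of_lt h]
          · simp [h]
          · simp [h.ne', (show ¬ (t : ℕ) < k + 1 by omega), h.not_gt]

theorem pssProposal_apply_of_le (y : Fin T → α) {K : ℕ} (hK : T ≤ K) (z : Fin T → α) :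
    pssProposal μ y K z = sampleDecodeProb μ z := by
  have hcyl := pssProposal_toOuterMeasure_prefixCylinder μ y K z
  rw [prefixCylinder_of_le hK, PMF.toOuterMeasure_apply_singleton] at hcyl
  rw [hcyl, sampleDecodeProb]
  exact Finset.prod_congr rfl fun t _ => if_pos (t.2.trans_le hK)

end ParallelScheduledSampling

theorem pss_gold_independent_general [Fintype α] [DecidableEq α]
    {T K : ℕ} (hK : T ≤ K)
    (μ : List α → PMF α) (y y' : Fin T → α) :
    pssProposal μ y K = pssProposal μ y' K :=
  PMF.ext fun z => by rw [pssProposal_apply_of_le μ y hK, pssProposal_apply_of_le μ y' hK]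

/-- Independence from the gold sequence: for `K ≥ T ≥ 1`, the Parallel
Scheduled Sampling proposal distributions with mixing probability `p = 1` after `K`
passes started from any two gold sequences `y, y'` coincide. -/
theorem pss_gold_independent [Fintype α] [DecidableEq α] [Nonempty α]
    {T K : ℕ} (hT : 1 ≤ T) (hK : T ≤ K)
    (μ : List α → PMF α) (y y' : Fin T → α) :
    pssProposal μ y K = pssProposal μ y' K :=
  pss_gold_independent_general hK μ y y'

end
end
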